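/- Let E ⊆ ℝⁿ (n ≥ 2) be an open weakly 1-semiconvex set with E^◇ ≠ ∅. Then there exists a family of closed rays {η(x)}_{x ∈ ∂E^◇}, each η(x) having endpoint x, such that (i) each η(x) is disjoint from E, and (ii) the union ⋃_{x ∈ ∂E^◇} η(x) ∪ E^◇ contains no closed ray whose endpoint lies in E^◇. -/

import Mathlib

/-!
By compactness of the unit sphere, the set of points all of whose rays meet the open set `E` is
open; by weak semiconvexity, `E^◇` stays away from the closure of `E`. Hence `E^◇` is open, so a
boundary point of `E^◇` lies neither in `E^◇` nor in `E`, and some ray from it misses `E`: these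
are the rays `η(x)`. Every ray from a point of `E^◇` meets `E`, whereas the rays `η(x)` and `E^◇`
itself avoid `E`.
-/

open Set Metric

/-- The closed ray with endpoint `x` in direction `α`. -/
def ray {n : ℕ} (x α : EuclideanSpace ℝ (Fin n)) : Set (EuclideanSpace ℝ (Fin n)) :=
  {z | ∃ t : ℝ, 0 ≤ t ∧ z = x + t • α}

/-- The straight line through `x` in direction `α`. -/
def line {n : ℕ} (x α : EuclideanSpace ℝ (Fin n)) : Set (EuclideanSpace ℝ (Fin n)) :=
  {z | ∃ t : ℝ, z = x + t • α}

/-- The set `E^◇` of 1-nonsemiconvexity points of `E`. -/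
def diamond {n : ℕ} (E : Set (EuclideanSpace ℝ (Fin n))) : Set (EuclideanSpace ℝ (Fin n)) :=
  {x | x ∉ E ∧ ∀ α : EuclideanSpace ℝ (Fin n), ‖α‖ = 1 → (ray x α ∩ E).Nonempty}

/-- The set `E^△` of 1-nonconvexity points of `E`. -/
def triangle {n : ℕ} (E : Set (EuclideanSpace ℝ (Fin n))) : Set (EuclideanSpace ℝ (Fin n)) :=
  {x | x ∉ E ∧ ∀ α : EuclideanSpace ℝ (Fin n), ‖α‖ = 1 → (line x α ∩ E).Nonempty}

/-- An (open) set is weakly 1-semiconvex if through every boundary point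
there passes a closed ray missing the set. -/
def WeaklySemiconvex {n : ℕ} (E : Set (EuclideanSpace ℝ (Fin n))) : Prop :=
  ∀ x ∈ frontier E, ∃ α : EuclideanSpace ℝ (Fin n), ‖α‖ = 1 ∧ ray x α ∩ E = ∅

/-- An (open) set is weakly 1-convex if through every boundary point
there passes a straight line missing the set. -/
def WeaklyConvex {n : ℕ} (E : Set (EuclideanSpace ℝ (Fin n))) : Prop :=
  ∀ x ∈ frontier E, ∃ α : EuclideanSpace ℝ (Fin n), ‖α‖ = 1 ∧ line x α ∩ E = ∅

open Filter Topology

section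

variable {n : ℕ} {E : Set (EuclideanSpace ℝ (Fin n))}

lemma isOpen_setOf_ray_inter_nonempty (hE : IsOpen E) :
    IsOpen {p : EuclideanSpace ℝ (Fin n) × EuclideanSpace ℝ (Fin n) |
      (ray p.1 p.2 ∩ E).Nonempty} := by
  have hunion : {p : EuclideanSpace ℝ (Fin n) × EuclideanSpace ℝ (Fin n) |
      (ray p.1 p.2 ∩ E).Nonempty} = ⋃ t ∈ Ici (0 : ℝ), (fun p => p.1 + t • p.2) ⁻¹' E := by
    ext p
    simp only [ray, mem_ofPred_eq, mem_iUnion, mem_Ici, mem_preimage]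
    exact ⟨fun ⟨_, ⟨t, ht, hz⟩, hzE⟩ => ⟨t, ht, hz ▸ hzE⟩,
      fun ⟨t, ht, hzE⟩ => ⟨_, ⟨t, ht, rfl⟩, hzE⟩⟩
  rw [hunion]
  exact isOpen_biUnion fun t _ => hE.preimage (by fun_prop)

lemma diamond_subset_compl_closure (hE : IsOpen E) (hws : WeaklySemiconvex E) :
    diamond E ⊆ (closure E)ᶜ := by
  intro x hx hcl
  obtain ⟨α, hα, hαE⟩ := hws x ⟨hcl, by rw [hE.interior_eq]; exact hx.1⟩
  exact (hx.2 α hα).ne_empty hαE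

lemma isOpen_diamond (hE : IsOpen E) (hws : WeaklySemiconvex E) : IsOpen (diamond E) := by
  refine isOpen_iff_eventually.2 fun x hx => ?_
  have hrays : ∀ᶠ y in 𝓝 x, ∀ α ∈ sphere (0 : EuclideanSpace ℝ (Fin n)) 1,
      (ray y α ∩ E).Nonempty :=
    (isCompact_sphere 0 1).eventually_forall_of_forall_eventually fun α hα =>
      (isOpen_setOf_ray_inter_nonempty hE).mem_nhds (hx.2 α (mem_sphere_zero_iff_norm.1 hα))
  have hfar : ∀ᶠ y in 𝓝 x, y ∈ (closure E)ᶜ :=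
    isClosed_closure.isOpen_compl.mem_nhds (diamond_subset_compl_closure hE hws hx)
  filter_upwards [hrays, hfar] with y hy hyE
  exact ⟨fun h => hyE (subset_closure h), fun α hα => hy α (mem_sphere_zero_iff_norm.2 hα)⟩

lemma exists_ray_inter_eq_empty_of_mem_frontier_diamond (hE : IsOpen E)
    (hws : WeaklySemiconvex E) {x : EuclideanSpace ℝ (Fin n)} (hx : x ∈ frontier (diamond E)) :
    ∃ α : EuclideanSpace ℝ (Fin n), ‖α‖ = 1 ∧ ray x α ∩ E = ∅ := by
  have hxd : x ∉ diamond E := ((isOpen_diamond hE hws).frontier_eq ▸ hx).2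
  have hxE : x ∉ E := closure_minimal (fun _ hz => hz.1) hE.isClosed_compl hx.1
  simpa [diamond, hxE, not_nonempty_iff_eq_empty] using hxd

end

theorem diamond_ray_family_general {n : ℕ} (E : Set (EuclideanSpace ℝ (Fin n)))
    (hE : IsOpen E) (hws : WeaklySemiconvex E) :
    ∃ η : EuclideanSpace ℝ (Fin n) → Set (EuclideanSpace ℝ (Fin n)),
      (∀ x ∈ frontier (diamond E),
        (∃ α : EuclideanSpace ℝ (Fin n), ‖α‖ = 1 ∧ η x = ray x α) ∧ η x ∩ E = ∅) ∧
      ¬ ∃ y ∈ diamond E, ∃ α : EuclideanSpace ℝ (Fin n), ‖α‖ = 1 ∧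
          ray y α ⊆ (⋃ x ∈ frontier (diamond E), η x) ∪ diamond E := by
  choose! α hα hαE using fun x (hx : x ∈ frontier (diamond E)) =>
    exists_ray_inter_eq_empty_of_mem_frontier_diamond hE hws hx
  refine ⟨fun x => ray x (α x), fun x hx => ⟨⟨α x, hα x hx, rfl⟩, hαE x hx⟩, ?_⟩
  rintro ⟨y, hy, β, hβ, hsub⟩
  obtain ⟨z, hzβ, hzE⟩ := hy.2 β hβ
  rcases hsub hzβ with hz | hz
  · obtain ⟨x, hx, hzx⟩ := mem_iUnion₂.1 hz
    exact (hαE x hx).subset ⟨hzx, hzE⟩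
  · exact hz.1 hzE

theorem diamond_ray_family {n : ℕ} (hn : 2 ≤ n) (E : Set (EuclideanSpace ℝ (Fin n)))
    (hE : IsOpen E) (hws : WeaklySemiconvex E) (hne : (diamond E).Nonempty) :
    ∃ η : EuclideanSpace ℝ (Fin n) → Set (EuclideanSpace ℝ (Fin n)),
      (∀ x ∈ frontier (diamond E),
        (∃ α : EuclideanSpace ℝ (Fin n), ‖α‖ = 1 ∧ η x = ray x α) ∧ η x ∩ E = ∅) ∧
      ¬ ∃ y ∈ diamond E, ∃ α : EuclideanSpace ℝ (Fin n), ‖α‖ = 1 ∧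
          ray y α ⊆ (⋃ x ∈ frontier (diamond E), η x) ∪ diamond E :=
  diamond_ray_family_general E hE hws
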